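/- The closed unit ball of any infinite-dimensional L¹ space is not LNC: given disjoint positive-measure sets A_n, the functions x with x = μ(A_n)⁻¹2⁻ⁿ on A_n, x' = μ(A₁)⁻¹ on A₁ and 0 elsewhere, and x_k equal to x on A_n for n < k, equal to μ(A_k)⁻¹2^(1-k) on A_k, and 0 for n > k, satisfy x_k → x in L¹ norm but ‖x_k + (x'-x)/2‖₁ = 1 + 2⁻ᵏ > 1 for all k. -/

import Mathlib

/-!
The map `c ↦ ∑ₙ c n • μ(A n)⁻¹ 𝟙_{A n}` is a linear isometry from `ℓ¹` into `L¹(μ)`, so every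
norm in the statement is the `ℓ¹` norm of an explicit coefficient sequence. The sequence `x_k`
agrees with `x` before `A_k` and puts the whole remaining mass `2⁻ᵏ` of `x` on `A_k`, so
`‖x_k - x‖₁ = 2⁻ᵏ → 0`. On the other hand `x_k + (x' - x) / 2` equals `x / 2` before `A_k`,
`-x / 2` after it and `2⁻ᵏ - 2⁻⁽ᵏ⁺²⁾` on `A_k`, plus `x' / 2` on `A₀`; its norm is
`1/2 + 1/2 + 2⁻⁽ᵏ⁺¹⁾ > 1`, so no relative neighbourhood of `x` in the ball survives the
translation by `(x' - x) / 2`.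
-/

open Set Filter Topology MeasureTheory

/-- Locally nonconical (LNC). -/
def LNC {X : Type*} [AddCommGroup X] [Module ℝ X] [TopologicalSpace X] (Q : Set X) : Prop :=
  ∀ x ∈ Q, ∀ x' ∈ Q,
    ∃ U, U ⊆ Q ∧ U ∈ nhdsWithin x Q ∧ ∀ u ∈ U, u + (2⁻¹ : ℝ) • (x' - x) ∈ Q

theorem not_LNC_of_tendsto {X ι : Type*} [AddCommGroup X] [Module ℝ X] [TopologicalSpace X]
    {Q : Set X} {l : Filter ι} [l.NeBot] {x x' : X} {u : ι → X} (hx : x ∈ Q) (hx' : x' ∈ Q)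
    (hu : ∀ᶠ k in l, u k ∈ Q) (hlim : Tendsto u l (𝓝 x))
    (hout : ∀ᶠ k in l, u k + (2⁻¹ : ℝ) • (x' - x) ∉ Q) : ¬ LNC Q := by
  intro hQ
  obtain ⟨U, -, hU, hU_shift⟩ := hQ x hx x' hx'
  obtain ⟨k, hkU, hk_out⟩ :=
    ((tendsto_nhdsWithin_iff.2 ⟨hlim, hu⟩).eventually_mem hU |>.and hout).exists
  exact hk_out (hU_shift _ hkU)

section Layered

variable {Ω : Type*} [MeasurableSpace Ω] {μ : Measure Ω} {A : ℕ → Set Ω}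

variable (μ A) in
noncomputable def layered (c : ℕ → ℝ) (ω : Ω) : ℝ :=
  ∑' n, (A n).indicator (fun _ => ((μ (A n)).toReal)⁻¹ * c n) ω

theorem layered_apply_of_mem (hdisj : Pairwise (Function.onFun Disjoint A)) {m : ℕ} {ω : Ω}
    (hω : ω ∈ A m) (c : ℕ → ℝ) : layered μ A c ω = ((μ (A m)).toReal)⁻¹ * c m := by
  rw [layered, tsum_eq_single m fun n hn =>
    indicator_of_notMem (disjoint_left.1 (hdisj hn.symm) hω) _, indicator_of_mem hω]

theorem layered_apply_of_notMem {ω : Ω} (hω : ω ∉ ⋃ n, A n) (c : ℕ → ℝ) :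
    layered μ A c ω = 0 := by
  simp_all [layered]

theorem layered_apply_eq_sum {c : ℕ → ℝ} {s : Finset ℕ} (hc : ∀ n ∉ s, c n = 0) (ω : Ω) :
    layered μ A c ω = ∑ n ∈ s, (A n).indicator (fun _ => ((μ (A n)).toReal)⁻¹ * c n) ω :=
  tsum_eq_sum fun n hn => by simp [hc n hn]

/-- Pointwise linear identities between functions `layered μ A c` reduce, through this lemma, to
identities between their coefficients. -/
theorem exists_layered_apply_eq_mul (hdisj : Pairwise (Function.onFun Disjoint A)) (ω : Ω) :
    ∃ (r : ℝ) (m : ℕ), ∀ c, layered μ A c ω = r * c m := by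
  by_cases hω : ω ∈ ⋃ n, A n
  · obtain ⟨m, hm⟩ := mem_iUnion.1 hω
    exact ⟨_, m, layered_apply_of_mem hdisj hm⟩
  · exact ⟨0, 0, fun c => by rw [layered_apply_of_notMem hω, zero_mul]⟩

theorem layered_sub_apply (hdisj : Pairwise (Function.onFun Disjoint A)) (c d : ℕ → ℝ)
    (ω : Ω) : layered μ A c ω - layered μ A d ω = layered μ A (fun n => c n - d n) ω := by
  obtain ⟨r, m, h⟩ := exists_layered_apply_eq_mul (μ := μ) hdisj ω
  simp only [h]
  ring

theorem layered_add_half_sub_apply (hdisj : Pairwise (Function.onFun Disjoint A))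
    (c d e : ℕ → ℝ) (ω : Ω) :
    layered μ A c ω + (layered μ A d ω - layered μ A e ω) / 2 =
      layered μ A (fun n => c n + (d n - e n) / 2) ω := by
  obtain ⟨r, m, h⟩ := exists_layered_apply_eq_mul (μ := μ) hdisj ω
  simp only [h]
  ring

theorem eqOn_layered (hdisj : Pairwise (Function.onFun Disjoint A)) (c : ℕ → ℝ) (n : ℕ) :
    EqOn (layered μ A c) (fun _ => ((μ (A n)).toReal)⁻¹ * c n) (A n) :=
  fun _ hω => layered_apply_of_mem hdisj hω c

theorem integrableOn_layered (hdisj : Pairwise (Function.onFun Disjoint A)) {n : ℕ}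
    (hA : MeasurableSet (A n)) (hfin : μ (A n) < ⊤) (c : ℕ → ℝ) :
    IntegrableOn (layered μ A c) (A n) μ :=
  (integrableOn_congr_fun (eqOn_layered hdisj c n) hA).2 (integrableOn_const hfin.ne)

theorem setIntegral_abs_layered (hdisj : Pairwise (Function.onFun Disjoint A)) {n : ℕ}
    (hA : MeasurableSet (A n)) (hpos : 0 < μ (A n)) (hfin : μ (A n) < ⊤) (c : ℕ → ℝ) :
    ∫ ω in A n, |layered μ A c ω| ∂μ = |c n| := by
  rw [setIntegral_congr_fun hA fun ω hω => congrArg abs (eqOn_layered hdisj c n hω),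
    setIntegral_const, measureReal_def, smul_eq_mul, abs_mul, abs_inv, ENNReal.abs_toReal,
    ← mul_assoc, mul_inv_cancel₀ (ENNReal.toReal_pos hpos.ne' hfin.ne).ne', one_mul]

theorem integrable_layered (hdisj : Pairwise (Function.onFun Disjoint A))
    (hA : ∀ n, MeasurableSet (A n)) (hpos : ∀ n, 0 < μ (A n)) (hfin : ∀ n, μ (A n) < ⊤)
    {c : ℕ → ℝ} (hc : Summable fun n => |c n|) : Integrable (layered μ A c) μ := by
  refine IntegrableOn.integrable_of_forall_notMem_eq_zero (s := ⋃ n, A n) ?_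
    fun ω hω => layered_apply_of_notMem hω c
  refine integrableOn_iUnion_of_summable_integral_norm
    (fun n => integrableOn_layered hdisj (hA n) (hfin n) c) ?_
  simpa only [Real.norm_eq_abs, setIntegral_abs_layered hdisj (hA _) (hpos _) (hfin _)] using hc

theorem integral_abs_layered (hdisj : Pairwise (Function.onFun Disjoint A))
    (hA : ∀ n, MeasurableSet (A n)) (hpos : ∀ n, 0 < μ (A n)) (hfin : ∀ n, μ (A n) < ⊤)
    {c : ℕ → ℝ} {a : ℝ} (hc : HasSum (fun n => |c n|) a) :
    ∫ ω, |layered μ A c ω| ∂μ = a := by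
  rw [← setIntegral_eq_integral_of_forall_compl_eq_zero (s := ⋃ n, A n)
      fun ω hω => by rw [layered_apply_of_notMem hω, abs_zero],
    integral_iUnion hA hdisj (integrable_layered hdisj hA hpos hfin hc.summable).abs.integrableOn,
    ← hc.tsum_eq]
  exact tsum_congr fun n => setIntegral_abs_layered hdisj (hA n) (hpos n) (hfin n) c

end Layered

noncomputable def geomCoeff (n : ℕ) : ℝ := 2⁻¹ ^ (n + 1)

noncomputable def truncGeomCoeff (k n : ℕ) : ℝ :=
  if n < k then 2⁻¹ ^ (n + 1) else if n = k then 2⁻¹ ^ k else 0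

theorem geomCoeff_pos (n : ℕ) : 0 < geomCoeff n := by
  unfold geomCoeff
  positivity

theorem hasSum_geomCoeff : HasSum geomCoeff 1 := by
  have h := (hasSum_geometric_of_lt_one (r := (2 : ℝ)⁻¹) (by norm_num) (by norm_num)).mul_left 2⁻¹
  rw [show (2⁻¹ : ℝ) * (1 - 2⁻¹)⁻¹ = 1 by norm_num] at h
  simp only [← pow_succ'] at h
  exact h

theorem hasSum_abs_geomCoeff : HasSum (fun n => |geomCoeff n|) 1 := by
  simpa only [fun n => abs_of_pos (geomCoeff_pos n)] using hasSum_geomCoeff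

theorem sum_range_geomCoeff (k : ℕ) : ∑ n ∈ Finset.range k, geomCoeff n = 1 - 2⁻¹ ^ k := by
  induction k with
  | zero => simp
  | succ k ih => rw [Finset.sum_range_succ, ih, geomCoeff]; ring

theorem hasSum_abs_truncGeomCoeff (k : ℕ) : HasSum (fun n => |truncGeomCoeff k n|) 1 := by
  have h := hasSum_sum_of_ne_finset_zero (L := .unconditional ℕ)
    (f := fun n => |truncGeomCoeff k n|) (s := Finset.range (k + 1)) fun n hn => by
      simp [truncGeomCoeff, show ¬ n < k by simp at hn; omega, show n ≠ k by simp at hn; omega]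
  rwa [Finset.sum_range_succ, Finset.sum_congr rfl fun n hn => ?_, sum_range_geomCoeff,
    truncGeomCoeff, if_neg (lt_irrefl k), if_pos rfl, abs_of_pos (by positivity),
    sub_add_cancel] at h
  simp [truncGeomCoeff, Finset.mem_range.1 hn, geomCoeff]

theorem abs_truncGeomCoeff_sub_geomCoeff (k n : ℕ) :
    |truncGeomCoeff k n - geomCoeff n| = if k ≤ n then geomCoeff n else 0 := by
  rcases lt_trichotomy n k with h | rfl | h
  · simp [truncGeomCoeff, geomCoeff, h, h.not_ge]
  · rw [truncGeomCoeff, geomCoeff, if_neg (lt_irrefl n), if_pos rfl, if_pos le_rfl, pow_succ]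
    rw [abs_of_nonneg] <;> [ring; nlinarith [pow_pos (by norm_num : (0 : ℝ) < 2⁻¹) n]]
  · simp [truncGeomCoeff, geomCoeff, h.not_gt, h.ne', h.le]

theorem hasSum_abs_truncGeomCoeff_sub_geomCoeff (k : ℕ) :
    HasSum (fun n => |truncGeomCoeff k n - geomCoeff n|) (2⁻¹ ^ k) := by
  simp only [abs_truncGeomCoeff_sub_geomCoeff]
  rw [← hasSum_nat_add_iff' k, Finset.sum_eq_zero fun n hn => if_neg (by simpa using hn),
    sub_zero]
  have h_shift (n : ℕ) :
      (if k ≤ n + k then geomCoeff (n + k) else 0) = 2⁻¹ ^ k * geomCoeff n := by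
    rw [if_pos (Nat.le_add_left k n), geomCoeff, geomCoeff]
    ring
  simpa only [h_shift, mul_one] using hasSum_geomCoeff.mul_left (2⁻¹ ^ k)

theorem abs_truncGeomCoeff_add_half_sub (k n : ℕ) :
    |truncGeomCoeff k n + ((if n = 0 then 1 else 0) - geomCoeff n) / 2| =
      geomCoeff (n + 1) + (if n = 0 then 2⁻¹ else 0) + (if n = k then geomCoeff k else 0) := by
  have hpos : (0 : ℝ) < 2⁻¹ ^ n := by positivity
  rcases lt_trichotomy n k with h | rfl | h
  · rw [abs_of_pos] <;> rcases eq_or_ne n 0 with rfl | h0 <;>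
      simp [truncGeomCoeff, geomCoeff, h.ne, *] <;> ring_nf <;> linarith
  · rw [abs_of_pos] <;> rcases eq_or_ne n 0 with rfl | h0 <;>
      simp [truncGeomCoeff, geomCoeff, *] <;> ring_nf <;> linarith
  · have h0 : n ≠ 0 := (k.zero_le.trans_lt h).ne'
    have hval : truncGeomCoeff k n + ((if n = 0 then 1 else 0) - geomCoeff n) / 2 =
        -geomCoeff (n + 1) := by
      simp only [truncGeomCoeff, geomCoeff, if_neg h.not_gt, if_neg h.ne', if_neg h0]
      ring
    rw [hval, abs_neg, abs_of_pos (geomCoeff_pos _), if_neg h0, if_neg h.ne', add_zero,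
      add_zero]

theorem hasSum_abs_truncGeomCoeff_add_half_sub (k : ℕ) :
    HasSum (fun n => |truncGeomCoeff k n + ((if n = 0 then 1 else 0) - geomCoeff n) / 2|)
      (1 + 2⁻¹ ^ (k + 1)) := by
  simp only [abs_truncGeomCoeff_add_half_sub]
  have h_succ : HasSum (fun n => geomCoeff (n + 1)) 2⁻¹ := by
    simpa only [geomCoeff, pow_succ' _ (_ + 1), mul_one] using hasSum_geomCoeff.mul_left 2⁻¹
  convert (h_succ.add (hasSum_ite_eq 0 2⁻¹)).add (hasSum_ite_eq k (geomCoeff k)) using 1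
  rw [geomCoeff]
  norm_num

theorem layered_truncGeomCoeff_apply {Ω : Type*} [MeasurableSpace Ω] (μ : Measure Ω)
    (A : ℕ → Set Ω) (k : ℕ) (ω : Ω) :
    layered μ A (truncGeomCoeff k) ω =
      (∑ n ∈ Finset.range k,
          (A n).indicator (fun _ => ((μ (A n)).toReal)⁻¹ * (2 : ℝ)⁻¹ ^ (n + 1)) ω) +
        (A k).indicator (fun _ => ((μ (A k)).toReal)⁻¹ * (2 : ℝ)⁻¹ ^ k) ω := by
  rw [layered_apply_eq_sum (s := Finset.range (k + 1)) fun n hn => ?_, Finset.sum_range_succ,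
    Finset.sum_congr rfl fun n hn => by rw [truncGeomCoeff, if_pos (Finset.mem_range.1 hn)],
    truncGeomCoeff, if_neg (lt_irrefl k), if_pos rfl]
  rw [Finset.mem_range, not_lt] at hn
  rw [truncGeomCoeff, if_neg (by omega), if_neg (by omega)]

section L1

variable {Ω : Type*} [MeasurableSpace Ω] {μ : Measure Ω}

theorem norm_toL1_eq_integral_abs {f : Ω → ℝ} (hf : Integrable f μ) :
    ‖hf.toL1 f‖ = ∫ ω, |f ω| ∂μ := by
  simp only [L1.norm_of_fun_eq_integral_norm, Real.norm_eq_abs]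

theorem not_LNC_unitBall_L1 {x x' : Ω → ℝ} {u : ℕ → Ω → ℝ} (hx : Integrable x μ)
    (hx' : Integrable x' μ) (hu : ∀ k, Integrable (u k) μ) (hx_le : ∫ ω, |x ω| ∂μ ≤ 1)
    (hx'_le : ∫ ω, |x' ω| ∂μ ≤ 1) (hu_le : ∀ k, ∫ ω, |u k ω| ∂μ ≤ 1)
    (hlim : Tendsto (fun k => ∫ ω, |u k ω - x ω| ∂μ) atTop (𝓝 0))
    (hout : ∀ k, 1 < ∫ ω, |u k ω + (x' ω - x ω) / 2| ∂μ) :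
    ¬ LNC {f : Lp ℝ 1 μ | ‖f‖ ≤ 1} := by
  refine not_LNC_of_tendsto (l := atTop) (u := fun k => (hu k).toL1 (u k))
    ((norm_toL1_eq_integral_abs hx).trans_le hx_le)
    ((norm_toL1_eq_integral_abs hx').trans_le hx'_le)
    (.of_forall fun k => (norm_toL1_eq_integral_abs (hu k)).trans_le (hu_le k)) ?_
    (.of_forall fun k => ?_)
  · rw [tendsto_iff_norm_sub_tendsto_zero]
    simpa only [← Integrable.toL1_sub, norm_toL1_eq_integral_abs, Pi.sub_apply] using hlim
  · rw [mem_ofPred_eq, not_le, ← Integrable.toL1_sub, ← Integrable.toL1_smul',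
      ← Integrable.toL1_add, norm_toL1_eq_integral_abs]
    refine (hout k).trans_eq (integral_congr_ae (.of_forall fun ω => ?_))
    simp only [Pi.add_apply, Pi.smul_apply, Pi.sub_apply, smul_eq_mul, div_eq_inv_mul]

end L1

/-- The closed unit ball of an infinite-dimensional `L¹` space is not LNC. Given pairwise
disjoint sets `A_n` (`n = 0, 1, 2, ...`) of positive finite measure, the functions
`x = ∑ₙ μ(A_n)⁻¹ 2⁻⁽ⁿ⁺¹⁾ 1_{A_n}`, `x' = μ(A₀)⁻¹ 1_{A₀}` and
`x_k = ∑_{n<k} μ(A_n)⁻¹ 2⁻⁽ⁿ⁺¹⁾ 1_{A_n} + μ(A_k)⁻¹ 2⁻ᵏ 1_{A_k}` are integrable, lie in the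
unit ball of `L¹` (each of norm `1`), `x_k → x` in `L¹` norm, but
`‖x_k + (x' - x)/2‖₁ = 1 + 2⁻⁽ᵏ⁺¹⁾ > 1` for every `k`; consequently the unit ball of `L¹(μ)`
is not LNC. -/
theorem unitBall_L1_not_lnc {Ω : Type*} [MeasurableSpace Ω] (μ : Measure Ω)
    (A : ℕ → Set Ω) (hA : ∀ n, MeasurableSet (A n))
    (hdisj : Pairwise (Function.onFun Disjoint A))
    (hpos : ∀ n, 0 < μ (A n)) (hfin : ∀ n, μ (A n) < ⊤) :
    let x : Ω → ℝ := fun ω =>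
      ∑' n : ℕ, (A n).indicator (fun _ => ((μ (A n)).toReal)⁻¹ * (2 : ℝ)⁻¹ ^ (n + 1)) ω
    let x' : Ω → ℝ := (A 0).indicator fun _ => ((μ (A 0)).toReal)⁻¹
    let xk : ℕ → Ω → ℝ := fun k ω =>
      (∑ n ∈ Finset.range k,
          (A n).indicator (fun _ => ((μ (A n)).toReal)⁻¹ * (2 : ℝ)⁻¹ ^ (n + 1)) ω) +
        (A k).indicator (fun _ => ((μ (A k)).toReal)⁻¹ * (2 : ℝ)⁻¹ ^ k) ω
    Integrable x μ ∧ Integrable x' μ ∧ (∀ k, Integrable (xk k) μ) ∧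
    (∫ ω, |x ω| ∂μ) = 1 ∧ (∫ ω, |x' ω| ∂μ) = 1 ∧ (∀ k, (∫ ω, |xk k ω| ∂μ) = 1) ∧
    Tendsto (fun k => ∫ ω, |xk k ω - x ω| ∂μ) atTop (𝓝 0) ∧
    (∀ k, (∫ ω, |xk k ω + (x' ω - x ω) / 2| ∂μ) = 1 + (2 : ℝ)⁻¹ ^ (k + 1)) ∧
    ¬ LNC {f : Lp ℝ 1 μ | ‖f‖ ≤ 1} := by
  intro x x' xk
  have hx : x = layered μ A geomCoeff := rfl
  have hx' : x' = layered μ A fun n => if n = 0 then 1 else 0 := funext fun ω => by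
    rw [layered_apply_eq_sum (s := {0}) fun n hn => if_neg (by simpa using hn),
      Finset.sum_singleton, if_pos rfl, mul_one]
  have hxk : xk = fun k => layered μ A (truncGeomCoeff k) :=
    funext₂ fun k ω => (layered_truncGeomCoeff_apply μ A k ω).symm
  clear_value x x' xk
  subst hx hx' hxk
  have hint {c : ℕ → ℝ} {a : ℝ} (hc : HasSum (fun n => |c n|) a) :=
    integrable_layered hdisj hA hpos hfin hc.summable
  have hnorm {c : ℕ → ℝ} {a : ℝ} (hc : HasSum (fun n => |c n|) a) :=
    integral_abs_layered hdisj hA hpos hfin hc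
  have hx'_coeff : HasSum (fun n => |(if n = 0 then 1 else 0 : ℝ)|) 1 := by
    simpa [apply_ite (|·|)] using hasSum_ite_eq 0 (1 : ℝ)
  have hlim := tendsto_pow_atTop_nhds_zero_of_lt_one (r := (2 : ℝ)⁻¹) (by norm_num) (by norm_num)
  simp_rw [← hnorm (hasSum_abs_truncGeomCoeff_sub_geomCoeff _), ← layered_sub_apply hdisj] at hlim
  have hout (k : ℕ) := hnorm (hasSum_abs_truncGeomCoeff_add_half_sub k)
  simp_rw [← layered_add_half_sub_apply hdisj] at hout
  exact ⟨hint hasSum_abs_geomCoeff, hint hx'_coeff, fun k => hint (hasSum_abs_truncGeomCoeff k),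
    hnorm hasSum_abs_geomCoeff, hnorm hx'_coeff, fun k => hnorm (hasSum_abs_truncGeomCoeff k),
    hlim, hout, not_LNC_unitBall_L1 (hint hasSum_abs_geomCoeff) (hint hx'_coeff)
      (fun k => hint (hasSum_abs_truncGeomCoeff k)) (hnorm hasSum_abs_geomCoeff).le
      (hnorm hx'_coeff).le (fun k => (hnorm (hasSum_abs_truncGeomCoeff k)).le) hlim
      fun k => (hout k).symm ▸ lt_add_of_pos_right 1 (by positivity)⟩
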